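/- arXiv:2501.17049 — 5 statements merged into one kernel-verified Lean document; each statement's English description precedes it below -/
import Mathlib

section
/- For the power entropy φ_p(s) = (s^p − p·s + p − 1)/(p(p−1)) with p ∈ ℝ \ {0,1} (and φ_1(s) = s log s − s + 1, φ_0(s) = s − 1 − log s), the pointwise inequality s·(φ_p'(s))² ≥ c·φ_p(s) holds for all s > 0 with some constant c > 0 if and only if p ≤ 1/2; moreover in that case the optimal constant is c = 1/(1−p). -/
open Real Filter Topology

/-- Power entropy generator `φ_p`. -/
noncomputable def phiP (p s : ℝ) : ℝ :=
  if p = 0 then s - 1 - Real.log s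
  else if p = 1 then s * Real.log s - s + 1
  else (s ^ p - p * s + p - 1) / (p * (p - 1))

/-- Derivative of the power entropy generator `φ_p`. -/
noncomputable def dphiP (p s : ℝ) : ℝ :=
  if p = 0 then 1 - 1 / s
  else if p = 1 then Real.log s
  else (s ^ (p - 1) - 1) / (p - 1)

lemma lojAux_split {p s : ℝ} (hs : 0 < s) :
    s * s ^ (p-1) = s ^ p ∧ s * s ^ (p-1) * s ^ (p-1) = s ^ (2*p-1) := by
  constructor
  · nth_rewrite 1 [← Real.rpow_one s]
    rw [← Real.rpow_add hs]; norm_num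
  · nth_rewrite 1 [← Real.rpow_one s]
    rw [← Real.rpow_add hs, ← Real.rpow_add hs]; ring_nf

lemma lojAux_keyD {p s : ℝ} (hp0 : p ≠ 0) (hp : p ≤ 1/2) (hs : 0 < s) :
    0 ≤ s ^ (2*p-1) + (1/p - 2) * s ^ p + (1 - 1/p) := by
  rcases lt_or_gt_of_ne hp0 with hneg | hpos
  · have hd : 2*p - 1 < 0 := by linarith
    have hw1 : 0 ≤ p / (2*p-1) := div_nonneg_of_nonpos (le_of_lt hneg) hd.le
    have hw2 : 0 ≤ (p-1) / (2*p-1) := div_nonneg_of_nonpos (by linarith) hd.le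
    have hsum : p / (2*p-1) + (p-1)/(2*p-1) = 1 := by
      rw [← add_div, div_eq_one_iff_eq hd.ne]; ring
    have hAM := Real.geom_mean_le_arith_mean2_weighted hw1 hw2
      (rpow_pos_of_pos hs (2*p-1)).le zero_le_one hsum
    rw [Real.one_rpow, mul_one, ← Real.rpow_mul hs.le] at hAM
    have he : (2*p-1) * (p / (2*p-1)) = p := by
      rw [mul_comm, div_mul_cancel₀ _ hd.ne]
    rw [he] at hAM
    have hid : s ^ (2*p-1) + (1/p - 2) * s ^ p + (1 - 1/p)
        = (2 - 1/p) * ((p/(2*p-1)) * s ^ (2*p-1) + (p-1)/(2*p-1) - s ^ p) := by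
      field_simp [hd.ne]
      ring
    rw [hid]
    have hc : (0:ℝ) ≤ 2 - 1/p := by
      have : 1/p < 0 := one_div_neg.mpr hneg
      linarith
    exact mul_nonneg hc (by linarith [hAM])
  · have h1p : 0 < 1 - p := by linarith
    have hw1 : 0 ≤ p / (1-p) := div_nonneg hpos.le h1p.le
    have hw2 : 0 ≤ (1-2*p) / (1-p) := div_nonneg (by linarith) h1p.le
    have hsum : p / (1-p) + (1-2*p)/(1-p) = 1 := by
      rw [← add_div, div_eq_one_iff_eq h1p.ne']; ring
    have hAM := Real.geom_mean_le_arith_mean2_weighted hw1 hw2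
      (rpow_pos_of_pos hs (2*p-1)).le (rpow_pos_of_pos hs p).le hsum
    rw [← Real.rpow_mul hs.le, ← Real.rpow_mul hs.le, ← Real.rpow_add hs] at hAM
    have he : (2*p-1) * (p / (1-p)) + p * ((1-2*p)/(1-p)) = 0 := by
      field_simp
      ring
    rw [he, Real.rpow_zero] at hAM
    have hid : s ^ (2*p-1) + (1/p - 2) * s ^ p + (1 - 1/p)
        = (1/p - 1) * ((p/(1-p)) * s ^ (2*p-1) + ((1-2*p)/(1-p)) * s ^ p - 1) := by
      field_simp
      ring
    rw [hid]
    have hc : (0:ℝ) ≤ 1/p - 1 := by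
      have h2 : (2:ℝ) ≤ 1/p := by rw [le_div_iff₀ hpos]; linarith
      linarith
    exact mul_nonneg hc (by linarith [hAM])

lemma lojAux_main {p s : ℝ} (hp0 : p ≠ 0) (hp1 : p ≠ 1) (hp : p ≤ 1/2) (hs : 0 < s) :
    s * ((s ^ (p-1) - 1)/(p-1)) ^ 2 ≥ (1/(1-p)) * ((s ^ p - p*s + p - 1)/(p*(p-1))) := by
  have hp1' : p - 1 ≠ 0 := sub_ne_zero.mpr hp1
  have h1p : (1:ℝ) - p ≠ 0 := by intro h; apply hp1; linarith [h]
  obtain ⟨e1, e2⟩ := lojAux_split (p := p) hs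
  have hD := lojAux_keyD hp0 hp hs
  have hid : s * ((s ^ (p-1) - 1)/(p-1)) ^ 2 - (1/(1-p)) * ((s ^ p - p*s + p - 1)/(p*(p-1)))
      = (s ^ (2*p-1) + (1/p - 2) * s ^ p + (1 - 1/p)) / (p-1)^2 := by
    rw [← e1, ← e2]
    field_simp
    ring
  have h0 : 0 ≤ (s ^ (2*p-1) + (1/p - 2) * s ^ p + (1 - 1/p)) / (p-1)^2 :=
    div_nonneg hD (sq_nonneg _)
  linarith [hid ▸ h0]

lemma lojAux_pointwise {p : ℝ} (hp : p ≤ 1/2) :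
    ∀ s > (0:ℝ), s * (dphiP p s) ^ 2 ≥ (1 / (1 - p)) * phiP p s := by
  intro s hs
  have hp1 : p ≠ 1 := by intro h; rw [h] at hp; norm_num at hp
  by_cases hp0 : p = 0
  · subst hp0
    simp only [phiP, dphiP, if_pos, if_true, eq_self_iff_true]
    have hlog := Real.log_le_sub_one_of_pos (inv_pos.2 hs)
    rw [Real.log_inv] at hlog
    have hid : s * (1 - 1/s)^2 - (1/(1-(0:ℝ))) * (s - 1 - Real.log s)
        = 1/s - 1 + Real.log s := by
      field_simp
      ring
    have : 0 ≤ 1/s - 1 + Real.log s := by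
      have : s⁻¹ - 1 + Real.log s ≥ 0 := by linarith
      simpa [one_div] using this
    linarith [hid ▸ this]
  · simp only [phiP, dphiP, if_neg hp0, if_neg hp1]
    exact lojAux_main hp0 hp1 hp hs

lemma lojAux_opt {p : ℝ} (hp : p ≤ 1/2) {c : ℝ}
    (h : ∀ s > (0:ℝ), s * (dphiP p s) ^ 2 ≥ c * phiP p s) : c ≤ 1 / (1 - p) := by
  have hlt : p < 1 := by linarith
  have h1p : (0:ℝ) < 1 - p := by linarith
  by_cases hp0 : p = 0
  · subst hp0
    have tlog : Tendsto (fun s:ℝ => Real.log s / s) atTop (𝓝 0) :=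
      Real.isLittleO_log_id_atTop.tendsto_div_nhds_zero
    have tinv : Tendsto (fun s:ℝ => s⁻¹) atTop (𝓝 (0:ℝ)) := tendsto_inv_atTop_zero
    have tf : Tendsto (fun s:ℝ => c * (1 - s⁻¹ - Real.log s / s)) atTop
        (𝓝 (c * (1 - 0 - 0))) :=
      (((tendsto_const_nhds.sub tinv).sub tlog)).const_mul c
    have tg : Tendsto (fun s:ℝ => (1 - s⁻¹)^2) atTop (𝓝 (((1:ℝ) - 0)^2)) :=
      (tendsto_const_nhds.sub tinv).pow 2
    have hev : ∀ᶠ s in atTop, c * (1 - s⁻¹ - Real.log s / s) ≤ (1 - s⁻¹)^2 := by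
      filter_upwards [eventually_gt_atTop (0:ℝ)] with s hs
      have hh := h s hs
      simp only [phiP, dphiP, if_pos, if_true, eq_self_iff_true] at hh
      have id1 : (c * (s - 1 - Real.log s))/s = c * (1 - s⁻¹ - Real.log s / s) := by
        field_simp
        try ring
      have id2 : (s * (1 - 1/s)^2)/s = (1 - s⁻¹)^2 := by
        rw [mul_div_cancel_left₀ _ hs.ne', one_div]
      rw [← id1, ← id2]
      gcongr
    have key := le_of_tendsto_of_tendsto tf tg hev
    have key2 : c ≤ 1 := by simpa using key
    simpa using key2
  · have hp1 : p ≠ 1 := hlt.ne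
    have hp1' : p - 1 ≠ 0 := sub_ne_zero.mpr hp1
    have t1 : Tendsto (fun s:ℝ => s ^ (p-1)) atTop (𝓝 0) := by
      have := tendsto_rpow_neg_atTop (y := 1-p) (by linarith)
      simpa [neg_sub] using this
    have tinv : Tendsto (fun s:ℝ => s⁻¹) atTop (𝓝 (0:ℝ)) := tendsto_inv_atTop_zero
    have tf : Tendsto (fun s:ℝ => c * ((s ^ (p-1) - p + (p-1)*s⁻¹)/(p*(p-1)))) atTop
        (𝓝 (c * ((0 - p + (p-1)*0)/(p*(p-1))))) :=
      (((t1.sub_const p).add (tinv.const_mul (p-1))).div_const _).const_mul c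
    have tg : Tendsto (fun s:ℝ => ((s ^ (p-1) - 1)/(p-1))^2) atTop
        (𝓝 (((0 - 1)/(p-1))^2)) :=
      ((t1.sub_const 1).div_const _).pow 2
    have hev : ∀ᶠ s in atTop, c * ((s ^ (p-1) - p + (p-1)*s⁻¹)/(p*(p-1)))
        ≤ ((s ^ (p-1) - 1)/(p-1))^2 := by
      filter_upwards [eventually_gt_atTop (0:ℝ)] with s hs
      have hh := h s hs
      simp only [phiP, dphiP, if_neg hp0, if_neg hp1] at hh
      obtain ⟨e1, _⟩ := lojAux_split (p := p) hs
      have id1 : (c * ((s ^ p - p*s + p - 1)/(p*(p-1))))/s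
          = c * ((s ^ (p-1) - p + (p-1)*s⁻¹)/(p*(p-1))) := by
        rw [← e1]; field_simp; ring
      have id2 : (s * ((s ^ (p-1) - 1)/(p-1))^2)/s = ((s ^ (p-1) - 1)/(p-1))^2 :=
        mul_div_cancel_left₀ _ hs.ne'
      rw [← id1, ← id2]
      gcongr
    have key := le_of_tendsto_of_tendsto tf tg hev
    have e3 : (0 - p + (p-1)*0)/(p*(p-1)) = 1/(1-p) := by
      rw [mul_zero, add_zero]
      field_simp
      ring
    have e4 : (((0:ℝ) - 1)/(p-1))^2 = 1/(1-p)^2 := by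
      rw [div_pow]
      norm_num
      ring
    rw [e3, e4] at key
    -- c * (1/(1-p)) ≤ 1/(1-p)^2  ⇒ c ≤ 1/(1-p)
    have := mul_le_mul_of_nonneg_right key h1p.le
    rw [mul_assoc, one_div_mul_cancel h1p.ne', mul_one] at this
    calc c ≤ 1/(1-p)^2 * (1-p) := this
      _ = 1/(1-p) := by field_simp

lemma lojAux_not {p : ℝ} (hp : 1/2 < p) {c : ℝ} (hc : 0 < c)
    (h : ∀ s > (0:ℝ), s * (dphiP p s) ^ 2 ≥ c * phiP p s) : False := by
  have hl : ∀ a:ℝ, 0 < a → Tendsto (fun s:ℝ => s ^ a) (𝓝[>] (0:ℝ)) (𝓝 0) := by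
    intro a ha
    have hcont := (Real.continuousAt_rpow_const 0 a (Or.inr ha.le)).tendsto
    rw [Real.zero_rpow ha.ne'] at hcont
    exact hcont.mono_left nhdsWithin_le_nhds
  have tid : Tendsto (fun s:ℝ => s) (𝓝[>] (0:ℝ)) (𝓝 0) :=
    tendsto_id.mono_right nhdsWithin_le_nhds
  by_cases hp1 : p = 1
  · subst hp1
    have tA : Tendsto (fun s:ℝ => s * (Real.log s)^2) (𝓝[>] (0:ℝ)) (𝓝 0) := by
      have hA := (tendsto_log_mul_rpow_nhdsGT_zero (r := 1/2) (by norm_num)).pow 2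
      rw [show ((0:ℝ)^2 : ℝ) = 0 by norm_num] at hA
      apply hA.congr'
      filter_upwards [self_mem_nhdsWithin] with s hs
      have hs : (0:ℝ) < s := hs
      have hss : s ^ ((1:ℝ)/2) * s ^ ((1:ℝ)/2) = s := by
        rw [← Real.rpow_add hs]; norm_num
      rw [mul_pow, pow_two (s ^ ((1:ℝ)/2)), hss]
      ring
    have tlog1 : Tendsto (fun s:ℝ => s * Real.log s) (𝓝[>] (0:ℝ)) (𝓝 0) := by
      have := tendsto_log_mul_rpow_nhdsGT_zero (r := 1) one_pos
      apply this.congr'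
      filter_upwards [self_mem_nhdsWithin] with s hs
      rw [Real.rpow_one]; ring
    have tφ : Tendsto (fun s:ℝ => c * (s * Real.log s - s + 1)) (𝓝[>] (0:ℝ))
        (𝓝 (c * (0 - 0 + 1))) :=
      ((tlog1.sub tid).add_const 1).const_mul c
    have hev : ∀ᶠ s in 𝓝[>] (0:ℝ), c * (s * Real.log s - s + 1) ≤ s * (Real.log s)^2 := by
      filter_upwards [self_mem_nhdsWithin] with s hs
      have hh := h s hs
      simp only [phiP, dphiP, if_neg one_ne_zero, if_pos rfl, if_true, eq_self_iff_true] at hh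
      exact hh
    have key := le_of_tendsto_of_tendsto tφ tA hev
    norm_num at key
    linarith
  · have hp0 : (0:ℝ) < p := by linarith
    have hp0' : p ≠ 0 := hp0.ne'
    have hp1' : p - 1 ≠ 0 := sub_ne_zero.mpr hp1
    have h2p : 0 < 2*p - 1 := by linarith
    have tA : Tendsto (fun s:ℝ => s * ((s ^ (p-1) - 1)/(p-1))^2) (𝓝[>] (0:ℝ)) (𝓝 0) := by
      have hA : Tendsto (fun s:ℝ => (s ^ (2*p-1) - 2 * s ^ p + s)/(p-1)^2) (𝓝[>] (0:ℝ))
          (𝓝 ((0 - 2*0 + 0)/(p-1)^2)) :=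
        (((hl _ h2p).sub ((hl _ hp0).const_mul 2)).add tid).div_const _
      rw [show ((0:ℝ) - 2*0 + 0)/(p-1)^2 = 0 by norm_num] at hA
      apply hA.congr'
      filter_upwards [self_mem_nhdsWithin] with s hs
      have hs : (0:ℝ) < s := hs
      obtain ⟨e1, e2⟩ := lojAux_split (p := p) hs
      rw [← e1, ← e2]
      field_simp
      ring
    have tφ : Tendsto (fun s:ℝ => c * ((s ^ p - p*s + p - 1)/(p*(p-1)))) (𝓝[>] (0:ℝ))
        (𝓝 (c * ((0 - p*0 + p - 1)/(p*(p-1))))) :=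
      (((((hl _ hp0).sub (tid.const_mul p)).add_const p).sub_const 1).div_const _).const_mul c
    have hev : ∀ᶠ s in 𝓝[>] (0:ℝ),
        c * ((s ^ p - p*s + p - 1)/(p*(p-1))) ≤ s * ((s ^ (p-1) - 1)/(p-1))^2 := by
      filter_upwards [self_mem_nhdsWithin] with s hs
      have hh := h s hs
      simp only [phiP, dphiP, if_neg hp0', if_neg hp1] at hh
      exact hh
    have key := le_of_tendsto_of_tendsto tφ tA hev
    have e3 : ((0:ℝ) - p*0 + p - 1)/(p*(p-1)) = 1/p := by
      rw [mul_zero, sub_zero]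
      rw [div_eq_div_iff (mul_ne_zero hp0' hp1') hp0']
      ring
    rw [e3] at key
    have : 0 < c * (1/p) := mul_pos hc (one_div_pos.mpr hp0)
    linarith

/-- The pointwise Łojasiewicz inequality `s·(φ_p'(s))² ≥ c·φ_p(s)` holds for some
`c > 0` iff `p ≤ 1/2`, in which case the optimal constant is `1/(1−p)`. -/
theorem loj_power_entropy_iff (p : ℝ) :
    ((∃ c > (0:ℝ), ∀ s > (0:ℝ), s * (dphiP p s) ^ 2 ≥ c * phiP p s) ↔ p ≤ 1/2) ∧
    (p ≤ 1/2 →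
      (∀ s > (0:ℝ), s * (dphiP p s) ^ 2 ≥ (1 / (1 - p)) * phiP p s) ∧
      (∀ c : ℝ, (∀ s > (0:ℝ), s * (dphiP p s) ^ 2 ≥ c * phiP p s) → c ≤ 1 / (1 - p))) := by
  constructor
  · constructor
    · rintro ⟨c, hc, h⟩
      by_contra hgt
      push_neg at hgt
      exact lojAux_not hgt hc h
    · intro hp
      exact ⟨1/(1-p), one_div_pos.mpr (by linarith), lojAux_pointwise hp⟩
  · intro hp
    exact ⟨lojAux_pointwise hp, fun c hc => lojAux_opt hp hc⟩
end

section
/- For p ∈ (0, 1/3], the function g_p(y) = (y^{2−1/p} − y²)/(1 − y) defined for y ∈ (0,1) is nonincreasing and satisfies g_p(y) ≥ 1/p for all y ∈ (0,1), with g_p(y) → 1/p as y → 1⁻. -/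
open Filter Set

private lemma gp_rpow_deriv (a : ℝ) {x : ℝ} (hx : x ≠ 0) :
    HasDerivAt (fun y : ℝ => y ^ a) (a * x ^ (a - 1)) x :=
  Real.hasDerivAt_rpow_const (Or.inl hx)

/-- Derivative of the numerator `f y = y ^ (2 - c) - y ^ 2`. -/
private lemma gp_hasDerivAt_f (c : ℝ) {x : ℝ} (hx : 0 < x) :
    HasDerivAt (fun y : ℝ => y ^ (2 - c) - y ^ 2)
      ((2 - c) * x ^ (1 - c) - 2 * x) x := by
  have h1 := gp_rpow_deriv (2 - c) hx.ne'
  have h2 : HasDerivAt (fun y : ℝ => y ^ 2) (2 * x) x := by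
    simpa using hasDerivAt_pow 2 x
  have := h1.sub h2
  rw [show (2 - c - 1) = 1 - c by ring] at this
  exact this

/-- Derivative of the auxiliary function
`h y = (2-c)*y^(1-c) + (c-1)*y^(2-c) - 2*y + y^2`. -/
private lemma gp_hasDerivAt_h (c : ℝ) {y : ℝ} (hy : 0 < y) :
    HasDerivAt (fun y : ℝ => (2-c)*y^(1-c) + (c-1)*y^(2-c) - 2*y + y^2)
      ((2-c)*((1-c)*y^(-c)) + (c-1)*((2-c)*y^(1-c)) - 2 + 2*y) y := by
  have d1 := (gp_rpow_deriv (1 - c) hy.ne').const_mul (2 - c)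
  have d2 := (gp_rpow_deriv (2 - c) hy.ne').const_mul (c - 1)
  have d3 : HasDerivAt (fun y : ℝ => 2 * y) 2 y := by
    simpa using (hasDerivAt_id y).const_mul (2 : ℝ)
  have d4 : HasDerivAt (fun y : ℝ => y ^ 2) (2 * y) y := by
    simpa using hasDerivAt_pow 2 y
  have := ((d1.add d2).sub d3).add d4
  rw [show (1 - c - 1) = -c by ring, show (2 - c - 1) = 1 - c by ring] at this
  exact this

/-- The derivative of `h` is nonnegative on `(0,1)`. -/
private lemma gp_h'_nonneg {c y : ℝ} (hc : 3 ≤ c) (hy : 0 < y) (hy1 : y < 1) :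
    0 ≤ (2-c)*((1-c)*y^(-c)) + (c-1)*((2-c)*y^(1-c)) - 2 + 2*y := by
  set B : ℝ := y ^ (-c) with hB
  have hBy : y ^ (1 - c) = y * B := by
    rw [hB, show (1 - c) = 1 + (-c) by ring, Real.rpow_add hy, Real.rpow_one]
  have hB1 : (1:ℝ) ≤ B := by
    rw [hB]
    calc (1:ℝ) = y ^ (0:ℝ) := (Real.rpow_zero y).symm
    _ ≤ y ^ (-c) := Real.rpow_le_rpow_of_exponent_ge hy hy1.le (by linarith)
  rw [hBy]
  nlinarith [mul_nonneg (sub_nonneg.2 hy1.le)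
      (sub_nonneg.2 (show (2:ℝ) ≤ (c-1)*(c-2)*B by
        nlinarith [mul_le_mul_of_nonneg_left hB1 (show (0:ℝ) ≤ (c-1)*(c-2) by nlinarith)])),
    sq_nonneg (c - 3)]

/-- The key inequality: the numerator of `g'` is nonpositive on `(0,1)`. -/
private lemma gp_key {c x : ℝ} (hc : 3 ≤ c) (hx0 : 0 < x) (hx1 : x < 1) :
    ((2-c) * x ^ (1-c) - 2*x) * (1-x) + (x ^ (2-c) - x^2) ≤ 0 := by
  set h : ℝ → ℝ := fun y => (2-c)*y^(1-c) + (c-1)*y^(2-c) - 2*y + y^2 with hh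
  have hmono : MonotoneOn h (Icc x 1) := by
    apply monotoneOn_of_deriv_nonneg (convex_Icc x 1)
    · intro y hy
      exact (gp_hasDerivAt_h c (lt_of_lt_of_le hx0 hy.1)).continuousAt.continuousWithinAt
    · rw [interior_Icc]
      intro y hy
      exact (gp_hasDerivAt_h c (hx0.trans hy.1)).differentiableAt.differentiableWithinAt
    · rw [interior_Icc]
      intro y hy
      rw [(gp_hasDerivAt_h c (hx0.trans hy.1)).deriv]
      exact gp_h'_nonneg hc (hx0.trans hy.1) hy.2
  have hx_le : h x ≤ h 1 :=
    hmono ⟨le_rfl, hx1.le⟩ ⟨hx1.le, le_rfl⟩ hx1.le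
  have h1 : h 1 = 0 := by
    simp only [hh, Real.one_rpow]
    ring
  have h2c : x ^ (2-c) = x * x ^ (1-c) := by
    rw [show (2 - c) = 1 + (1 - c) by ring, Real.rpow_add hx0, Real.rpow_one]
  have hxval : h x = (2-c)*x^(1-c) + (c-1)*x^(2-c) - 2*x + x^2 := rfl
  rw [h1, hxval, h2c] at hx_le
  nlinarith [hx_le]

/-- `HasDerivAt` for `g` on `(0,1)`. -/
private lemma gp_hasDerivAt_g (c : ℝ) {x : ℝ} (hx0 : 0 < x) (hx1 : x < 1) :
    HasDerivAt (fun y : ℝ => (y ^ (2 - c) - y ^ 2) / (1 - y))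
      ((((2-c) * x ^ (1-c) - 2*x) * (1-x) - (x ^ (2-c) - x^2) * (-1)) / (1-x)^2) x := by
  have hf := gp_hasDerivAt_f c hx0
  have hu : HasDerivAt (fun y : ℝ => 1 - y) (-1) x := (hasDerivAt_id x).const_sub 1
  exact hf.div hu (show (1:ℝ) - x ≠ 0 by intro h; nlinarith [sub_eq_zero.mp h])

/-- For `p ∈ (0, 1/3]`, the function `g_p(y) = (y^{2−1/p} − y²)/(1 − y)` on `(0,1)`
is nonincreasing, bounded below by `1/p`, and tends to `1/p` as `y → 1⁻`. -/
theorem gp_antitone_and_lower_bound (p : ℝ) (hp0 : 0 < p) (hp : p ≤ 1/3) :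
    AntitoneOn (fun y : ℝ => (y ^ (2 - 1/p) - y ^ 2) / (1 - y)) (Set.Ioo 0 1) ∧
    (∀ y ∈ Set.Ioo (0:ℝ) 1, (y ^ (2 - 1/p) - y ^ 2) / (1 - y) ≥ 1 / p) ∧
    Tendsto (fun y : ℝ => (y ^ (2 - 1/p) - y ^ 2) / (1 - y))
      (nhdsWithin 1 (Set.Iio 1)) (nhds (1 / p)) := by
  set c : ℝ := 1 / p with hcdef
  have hc : 3 ≤ c := by
    rw [hcdef, le_div_iff₀ hp0]
    linarith
  -- Antitonicity
  have hanti : AntitoneOn (fun y : ℝ => (y ^ (2 - c) - y ^ 2) / (1 - y)) (Set.Ioo 0 1) := by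
    apply antitoneOn_of_deriv_nonpos (convex_Ioo 0 1)
    · intro y hy
      exact (gp_hasDerivAt_g c hy.1 hy.2).continuousAt.continuousWithinAt
    · rw [interior_Ioo]
      intro y hy
      exact (gp_hasDerivAt_g c hy.1 hy.2).differentiableAt.differentiableWithinAt
    · rw [interior_Ioo]
      intro y hy
      rw [(gp_hasDerivAt_g c hy.1 hy.2).deriv]
      apply div_nonpos_of_nonpos_of_nonneg _ (sq_nonneg _)
      have := gp_key hc hy.1 hy.2
      nlinarith [this]
  -- Limit
  have hlim : Tendsto (fun y : ℝ => (y ^ (2 - c) - y ^ 2) / (1 - y))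
      (nhdsWithin 1 (Set.Iio 1)) (nhds c) := by
    have hf1 : HasDerivAt (fun y : ℝ => y ^ (2 - c) - y ^ 2) (-c) 1 := by
      have h := gp_hasDerivAt_f c (show (0:ℝ) < 1 by norm_num)
      rw [show (2 - c) * (1:ℝ) ^ (1 - c) - 2 * 1 = -c by rw [Real.one_rpow]; ring] at h
      exact h
    have hslope : Tendsto (slope (fun y : ℝ => y ^ (2 - c) - y ^ 2) 1)
        (nhdsWithin 1 {(1:ℝ)}ᶜ) (nhds (-c)) :=
      hasDerivAt_iff_tendsto_slope.mp hf1
    have hslope' : Tendsto (slope (fun y : ℝ => y ^ (2 - c) - y ^ 2) 1)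
        (nhdsWithin 1 (Set.Iio 1)) (nhds (-c)) :=
      hslope.mono_left (nhdsWithin_mono 1 (fun y hy => ne_of_lt hy))
    have : Tendsto (fun y : ℝ => -(slope (fun y : ℝ => y ^ (2 - c) - y ^ 2) 1 y))
        (nhdsWithin 1 (Set.Iio 1)) (nhds c) := by
      simpa using hslope'.neg
    apply this.congr'
    filter_upwards [self_mem_nhdsWithin] with y hy
    have h1 : (1:ℝ) ^ (2 - c) - (1:ℝ) ^ 2 = 0 := by rw [Real.one_rpow]; ring
    rw [slope_def_field, h1, sub_zero, ← div_neg, neg_sub]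
  refine ⟨hanti, ?_, hlim⟩
  -- Lower bound
  intro y hy
  have : c ≤ (y ^ (2 - c) - y ^ 2) / (1 - y) := by
    apply le_of_tendsto hlim
    filter_upwards [Ioo_mem_nhdsLT_of_mem (show (1:ℝ) ∈ Ioc y 1 from ⟨hy.2, le_rfl⟩)]
      with z hz
    exact hanti hy ⟨hy.1.trans hz.1, hz.2⟩ hz.1.le
  exact this
end

section
/- Spherical Hellinger Łojasiewicz inequality, case p = 0: Let π, ρ be probability measures with ρ = r·π, r > 0 a.e. Then ∫ r (1 − 1/r)² dπ ≥ ∫ (−log r) dπ, i.e., the spherical Hellinger dissipation dominates the forward KL divergence D_{φ₀}(ρ|π) with constant M₀ = 1. -/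
open MeasureTheory

/-- Spherical Hellinger Łojasiewicz inequality for `p = 0`: for a probability density
`r > 0` with `∫ r dπ = 1`, the spherical Hellinger dissipation dominates the forward KL
divergence with constant `M₀ = 1`: `∫ r (1 − 1/r)² dπ ≥ ∫ (−log r) dπ`. -/
theorem spherical_hellinger_loj_p_zero {Ω : Type*} [MeasurableSpace Ω]
    (π : Measure Ω) [IsProbabilityMeasure π]
    (r : Ω → ℝ) (hr : ∀ x, 0 < r x)
    (hint : Integrable r π)
    (hinv : Integrable (fun x => 1 / r x) π)
    (hlog : Integrable (fun x => Real.log (r x)) π)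
    (hmass : ∫ x, r x ∂π = 1) :
    ∫ x, r x * (1 - 1 / r x) ^ 2 ∂π ≥ ∫ x, (- Real.log (r x)) ∂π := by
  have hfeq : ∀ x, r x * (1 - 1 / r x) ^ 2 = r x - 2 + 1 / r x := by
    intro x
    have h := (hr x).ne'
    field_simp
    ring
  have h1 : ∫ x, r x * (1 - 1 / r x) ^ 2 ∂π = ∫ x, (r x - 2 + 1 / r x) ∂π :=
    integral_congr_ae (Filter.Eventually.of_forall fun x => hfeq x)
  have h2 : ∫ x, (r x - 2 + 1 / r x) ∂π = (∫ x, 1 / r x ∂π) - 1 := by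
    have ha : ∫ x, (r x - 2 + 1 / r x) ∂π
        = (∫ x, (r x - 2) ∂π) + ∫ x, 1 / r x ∂π :=
      integral_add (hint.sub (integrable_const 2)) hinv
    have hb : ∫ x, (r x - 2) ∂π = (∫ x, r x ∂π) - ∫ x, (2 : ℝ) ∂π :=
      integral_sub hint (integrable_const 2)
    rw [ha, hb, hmass, integral_const]
    simp
    ring
  have hpt : ∀ x, - Real.log (r x) + 1 ≤ 1 / r x := by
    intro x
    have h := Real.log_le_sub_one_of_pos (x := 1 / r x) (div_pos one_pos (hr x))
    rw [Real.log_div one_ne_zero (hr x).ne', Real.log_one] at h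
    linarith
  have h3 : ∫ x, (- Real.log (r x) + 1) ∂π ≤ ∫ x, 1 / r x ∂π :=
    integral_mono (hlog.neg.add (integrable_const 1)) hinv hpt
  have h4 : ∫ x, (- Real.log (r x) + 1) ∂π = (∫ x, - Real.log (r x) ∂π) + 1 := by
    have ha : ∫ x, (- Real.log (r x) + 1) ∂π
        = (∫ x, - Real.log (r x) ∂π) + ∫ x, (1 : ℝ) ∂π :=
      integral_add hlog.neg (integrable_const 1)
    rw [ha, integral_const]
    simp
  rw [ge_iff_le, h1, h2]
  linarith [h3, h4.symm]
end

section
/- For p ≤ 1/2, the quantity m_{p,p} = inf_{r>0, r≠1} r·(φ_p'(r))²/φ_p(r) equals 1/(1−p). -/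
open Real Filter Topology

lemma phiP_one (p : ℝ) : phiP p 1 = 0 := by
  unfold phiP
  split_ifs <;> simp

lemma dphiP_one (p : ℝ) : dphiP p 1 = 0 := by
  unfold dphiP
  split_ifs <;> simp

lemma hasDerivAt_phiP {p : ℝ} (hp1 : p ≠ 1) {r : ℝ} (hr : 0 < r) :
    HasDerivAt (phiP p) (dphiP p r) r := by
  rcases eq_or_ne p 0 with h0 | h0
  · subst h0
    have e : phiP 0 = fun s : ℝ => s - 1 - Real.log s := by
      funext s; simp [phiP]
    have e2 : dphiP 0 r = 1 - r⁻¹ := by simp [dphiP, one_div]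
    rw [e, e2]
    exact ((hasDerivAt_id r).sub_const 1).sub (Real.hasDerivAt_log hr.ne')
  · have e : phiP p = fun s : ℝ => (s ^ p - p * s + p - 1) / (p * (p - 1)) := by
      funext s; simp [phiP, h0, hp1]
    have e2 : dphiP p r = (r ^ (p - 1) - 1) / (p - 1) := by simp [dphiP, h0, hp1]
    rw [e, e2]
    have h1 : HasDerivAt (fun s : ℝ => s ^ p - p * s + p - 1)
        (p * r ^ (p - 1) - p * 1) r :=
      (((Real.hasDerivAt_rpow_const (Or.inl hr.ne')).sub
        ((hasDerivAt_id r).const_mul p)).add_const p).sub_const 1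
    have h2 := h1.div_const (p * (p - 1))
    refine h2.congr_deriv ?_
    have hp1' : p - 1 ≠ 0 := sub_ne_zero.mpr hp1
    rw [div_eq_div_iff (mul_ne_zero h0 hp1') hp1']
    ring

lemma hasDerivAt_dphiP {p : ℝ} (hp1 : p ≠ 1) {r : ℝ} (hr : 0 < r) :
    HasDerivAt (dphiP p) (r ^ (p - 2)) r := by
  rcases eq_or_ne p 0 with h0 | h0
  · subst h0
    have e : dphiP 0 = fun s : ℝ => 1 - s⁻¹ := by
      funext s; simp [dphiP, one_div]
    rw [e]
    have h1 : HasDerivAt (fun s : ℝ => 1 - s⁻¹) (-(-(r ^ 2)⁻¹)) r :=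
      (hasDerivAt_inv hr.ne').const_sub 1
    convert h1 using 1
    rw [show (0:ℝ) - 2 = -2 by norm_num, Real.rpow_neg hr.le,
      show ((2:ℝ)) = ((2:ℕ):ℝ) by norm_num, Real.rpow_natCast]
    ring
  · have e : dphiP p = fun s : ℝ => (s ^ (p - 1) - 1) / (p - 1) := by
      funext s; simp [dphiP, h0, hp1]
    rw [e]
    have h1 : HasDerivAt (fun s : ℝ => (s ^ (p - 1) - 1) / (p - 1))
        (((p - 1) * r ^ (p - 1 - 1)) / (p - 1)) r :=
      ((Real.hasDerivAt_rpow_const (Or.inl hr.ne')).sub_const 1).div_const (p - 1)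
    convert h1 using 1
    have hp1' : p - 1 ≠ 0 := sub_ne_zero.mpr hp1
    rw [show p - 1 - 1 = p - 2 by ring]
    field_simp

lemma key_id {p : ℝ} (hp1 : p ≠ 1) {r : ℝ} (hr : 0 < r) :
    (1 - p) * dphiP p r = 1 - r ^ (p - 1) := by
  rcases eq_or_ne p 0 with h0 | h0
  · subst h0
    rw [show (0:ℝ) - 1 = -1 by norm_num, Real.rpow_neg_one]
    simp [dphiP, one_div]
  · have e2 : dphiP p r = (r ^ (p - 1) - 1) / (p - 1) := by simp [dphiP, h0, hp1]
    rw [e2]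
    have hp1' : p - 1 ≠ 0 := sub_ne_zero.mpr hp1
    field_simp
    ring

lemma dphiP_pos {p : ℝ} (hp1 : p < 1) {r : ℝ} (hr : 1 < r) : 0 < dphiP p r := by
  rcases eq_or_ne p 0 with h0 | h0
  · subst h0
    have : 1 / r < 1 := by
      rw [div_lt_one (by linarith)]; linarith
    have e : dphiP 0 r = 1 - 1 / r := by simp [dphiP]
    rw [e]; linarith
  · have e2 : dphiP p r = (r ^ (p - 1) - 1) / (p - 1) := by simp [dphiP, h0, hp1.ne]
    rw [e2]
    have ht : r ^ (p - 1) < 1 :=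
      Real.rpow_lt_one_of_one_lt_of_neg hr (by linarith)
    exact div_pos_of_neg_of_neg (by linarith) (by linarith)

lemma dphiP_neg {p : ℝ} (hp1 : p < 1) {r : ℝ} (hr0 : 0 < r) (hr : r < 1) :
    dphiP p r < 0 := by
  rcases eq_or_ne p 0 with h0 | h0
  · subst h0
    have : 1 < 1 / r := by
      rw [lt_div_iff₀ hr0]; linarith
    have e : dphiP 0 r = 1 - 1 / r := by simp [dphiP]
    rw [e]; linarith
  · have e2 : dphiP p r = (r ^ (p - 1) - 1) / (p - 1) := by simp [dphiP, h0, hp1.ne]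
    rw [e2]
    have ht : 1 < r ^ (p - 1) :=
      (Real.one_lt_rpow_iff_of_pos hr0).mpr (Or.inr ⟨hr, by linarith⟩)
    exact div_neg_of_pos_of_neg (by linarith) (by linarith)

lemma phiP_pos {p : ℝ} (hp1 : p < 1) {r : ℝ} (hr0 : 0 < r) (hr : r ≠ 1) :
    0 < phiP p r := by
  rcases lt_or_gt_of_ne hr with h | h
  · have hanti : StrictAntiOn (phiP p) (Set.Ioc 0 1) := by
      apply strictAntiOn_of_deriv_neg (convex_Ioc 0 1)
      · intro x hx
        exact (hasDerivAt_phiP hp1.ne hx.1).continuousAt.continuousWithinAt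
      · intro x hx
        rw [interior_Ioc] at hx
        rw [(hasDerivAt_phiP hp1.ne hx.1).deriv]
        exact dphiP_neg hp1 hx.1 hx.2
    have := hanti ⟨hr0, h.le⟩ ⟨zero_lt_one, le_refl 1⟩ h
    rwa [phiP_one] at this
  · have hmono : StrictMonoOn (phiP p) (Set.Ici 1) := by
      apply strictMonoOn_of_deriv_pos (convex_Ici 1)
      · intro x hx
        exact (hasDerivAt_phiP hp1.ne (lt_of_lt_of_le zero_lt_one hx)).continuousAt.continuousWithinAt
      · intro x hx
        rw [interior_Ici] at hx
        rw [(hasDerivAt_phiP hp1.ne (lt_trans zero_lt_one hx)).deriv]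
        exact dphiP_pos hp1 hx
    have := hmono (Set.self_mem_Ici) (le_of_lt h) h
    rwa [phiP_one] at this

lemma hasDerivAt_g {p : ℝ} (hp1 : p ≠ 1) {x : ℝ} (hx : 0 < x) :
    HasDerivAt (fun s => (1 - p) * (s * (dphiP p s) ^ 2) - phiP p s)
      (dphiP p x * ((1 - 2 * p) * x ^ (p - 1))) x := by
  have hd := hasDerivAt_dphiP hp1 hx
  have hsq : HasDerivAt (fun s => (dphiP p s) ^ 2)
      (((2:ℕ):ℝ) * dphiP p x ^ (2 - 1) * x ^ (p - 2)) x := hd.pow 2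
  have hmul : HasDerivAt (fun s => s * (dphiP p s) ^ 2)
      (1 * (dphiP p x) ^ 2 + x * (((2:ℕ):ℝ) * dphiP p x ^ (2 - 1) * x ^ (p - 2))) x :=
    (hasDerivAt_id x).mul hsq
  have hg := (hmul.const_mul (1 - p)).sub (hasDerivAt_phiP hp1 hx)
  refine hg.congr_deriv ?_
  have h1 : (1 - p) * dphiP p x = 1 - x ^ (p - 1) := key_id hp1 hx
  have h2 : x ^ (p - 1) = x ^ (p - 2) * x := by
    rw [← Real.rpow_add_one hx.ne' (p - 2)]
    congr 1; ring
  set D := dphiP p x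
  set t := x ^ (p - 1)
  set u := x ^ (p - 2)
  linear_combination (D * h1) - 2 * (1 - p) * D * h2

lemma g_nonneg {p : ℝ} (hp : p ≤ 1 / 2) {r : ℝ} (hr0 : 0 < r) :
    phiP p r ≤ (1 - p) * (r * (dphiP p r) ^ 2) := by
  have hp1 : p < 1 := by linarith
  set g : ℝ → ℝ := fun s => (1 - p) * (s * (dphiP p s) ^ 2) - phiP p s with hgdef
  have hg1 : g 1 = 0 := by simp [hgdef, phiP_one, dphiP_one]
  have key : 0 ≤ g r := by
    rcases lt_trichotomy r 1 with h | h | h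
    · have hanti : AntitoneOn g (Set.Ioc 0 1) := by
        apply antitoneOn_of_deriv_nonpos (convex_Ioc 0 1)
        · intro x hx
          exact (hasDerivAt_g hp1.ne hx.1).continuousAt.continuousWithinAt
        · intro x hx
          rw [interior_Ioc] at hx
          exact (hasDerivAt_g hp1.ne hx.1).differentiableAt.differentiableWithinAt
        · intro x hx
          rw [interior_Ioc] at hx
          rw [(hasDerivAt_g hp1.ne hx.1).deriv]
          have hD : dphiP p x < 0 := dphiP_neg hp1 hx.1 hx.2
          have ht : 0 < x ^ (p - 1) := Real.rpow_pos_of_pos hx.1 _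
          have h2p : 0 ≤ 1 - 2 * p := by linarith
          exact mul_nonpos_of_nonpos_of_nonneg hD.le (by positivity)
      have := hanti ⟨hr0, h.le⟩ ⟨zero_lt_one, le_refl 1⟩ h.le
      rw [hg1] at this
      linarith
    · subst h; rw [hg1]
    · have hmono : MonotoneOn g (Set.Ici 1) := by
        apply monotoneOn_of_deriv_nonneg (convex_Ici 1)
        · intro x hx
          exact (hasDerivAt_g hp1.ne (lt_of_lt_of_le zero_lt_one hx)).continuousAt.continuousWithinAt
        · intro x hx
          rw [interior_Ici] at hx
          exact (hasDerivAt_g hp1.ne (lt_trans zero_lt_one hx)).differentiableAt.differentiableWithinAt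
        · intro x hx
          rw [interior_Ici] at hx
          rw [(hasDerivAt_g hp1.ne (lt_trans zero_lt_one hx)).deriv]
          have hD : 0 < dphiP p x := dphiP_pos hp1 hx
          have ht : 0 < x ^ (p - 1) := Real.rpow_pos_of_pos (lt_trans zero_lt_one hx) _
          have h2p : 0 ≤ 1 - 2 * p := by linarith
          positivity
      have := hmono Set.self_mem_Ici (le_of_lt h) h.le
      rw [hg1] at this
      linarith
  simpa [hgdef, sub_nonneg] using key

lemma tendsto_dphiP {p : ℝ} (hp1 : p < 1) :
    Tendsto (fun r => dphiP p r) atTop (𝓝 (1 / (1 - p))) := by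
  rcases eq_or_ne p 0 with h0 | h0
  · subst h0
    have e : (fun r : ℝ => dphiP 0 r) = fun r : ℝ => 1 - 1 / r := by
      funext s; simp [dphiP]
    rw [e]
    have : Tendsto (fun r : ℝ => 1 / r) atTop (𝓝 0) := by
      simpa [one_div] using tendsto_inv_atTop_zero
    have h := tendsto_const_nhds.sub this (f := fun _ : ℝ => (1:ℝ))
    simpa using h
  · have e : (fun r : ℝ => dphiP p r) = fun r : ℝ => (r ^ (p - 1) - 1) / (p - 1) := by
      funext s; simp [dphiP, h0, hp1.ne]
    rw [e]
    have ht : Tendsto (fun r : ℝ => r ^ (p - 1)) atTop (𝓝 0) := by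
      have := tendsto_rpow_neg_atTop (show (0:ℝ) < 1 - p by linarith)
      simpa [show -(1 - p) = p - 1 by ring] using this
    have h := (ht.sub_const 1).div_const (p - 1)
    have : (0 - 1) / (p - 1) = 1 / (1 - p) := by
      rw [div_eq_div_iff (by intro hc; apply hp1.ne; linarith) (by intro hc; apply hp1.ne; linarith)]
      ring
    rwa [this] at h

lemma tendsto_phiP_div {p : ℝ} (hp1 : p < 1) :
    Tendsto (fun r => phiP p r / r) atTop (𝓝 (1 / (1 - p))) := by
  rcases eq_or_ne p 0 with h0 | h0
  · subst h0
    have hlog : Tendsto (fun r : ℝ => Real.log r / r) atTop (𝓝 0) := by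
      have := Real.tendsto_pow_log_div_mul_add_atTop 1 0 1 one_ne_zero
      simpa using this
    have hinv : Tendsto (fun r : ℝ => 1 / r) atTop (𝓝 0) := by
      simpa [one_div] using tendsto_inv_atTop_zero
    have h := (tendsto_const_nhds.sub hinv (f := fun _ : ℝ => (1:ℝ))).sub hlog
    have he : (fun r : ℝ => phiP 0 r / r) =ᶠ[atTop] fun r => 1 - 1 / r - Real.log r / r := by
      filter_upwards [eventually_gt_atTop (0:ℝ)] with r hr
      have : phiP 0 r = r - 1 - Real.log r := by simp [phiP]
      rw [this]
      field_simp
    rw [show (1:ℝ) / (1 - 0) = 1 - 0 - 0 by norm_num]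
    exact Tendsto.congr' he.symm h
  · have ht : Tendsto (fun r : ℝ => r ^ (p - 1)) atTop (𝓝 0) := by
      have := tendsto_rpow_neg_atTop (show (0:ℝ) < 1 - p by linarith)
      simpa [show -(1 - p) = p - 1 by ring] using this
    have hinv : Tendsto (fun r : ℝ => (p - 1) / r) atTop (𝓝 0) := by
      simpa [div_eq_mul_inv] using (tendsto_inv_atTop_zero (𝕜 := ℝ)).const_mul (p - 1)
    have h := ((ht.sub_const p).add hinv).div_const (p * (p - 1))
    have he : (fun r : ℝ => phiP p r / r) =ᶠ[atTop]
        fun r => (r ^ (p - 1) - p + (p - 1) / r) / (p * (p - 1)) := by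
      filter_upwards [eventually_gt_atTop (0:ℝ)] with r hr
      have e : phiP p r = (r ^ p - p * r + p - 1) / (p * (p - 1)) := by
        simp [phiP, h0, hp1.ne]
      have hrp : r ^ p = r ^ (p - 1) * r := by
        rw [← Real.rpow_add_one hr.ne' (p - 1)]
        congr 1; ring
      rw [e, hrp]
      have hpp : p * (p - 1) ≠ 0 :=
        mul_ne_zero h0 (by intro hc; apply hp1.ne; linarith)
      field_simp
      ring
    have hval : (0 - p + 0) / (p * (p - 1)) = 1 / (1 - p) := by
      rw [div_eq_div_iff (mul_ne_zero h0 (by intro hc; apply hp1.ne; linarith))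
        (by intro hc; apply hp1.ne; linarith)]
      ring
    rw [← hval]
    exact Tendsto.congr' he.symm h

/-- For `p ≤ 1/2`, `m_{p,p} = inf_{r>0, r≠1} r·(φ_p'(r))²/φ_p(r) = 1/(1−p)`. -/
theorem mpp_eq (p : ℝ) (hp : p ≤ 1/2) :
    sInf {m : ℝ | ∃ r : ℝ, 0 < r ∧ r ≠ 1 ∧
        m = r * (dphiP p r) ^ 2 / phiP p r} = 1 / (1 - p) := by
  have hp1 : p < 1 := by linarith
  have h1p : (0:ℝ) < 1 - p := by linarith
  apply csInf_eq_of_forall_ge_of_forall_gt_exists_lt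
  · exact ⟨2 * (dphiP p 2) ^ 2 / phiP p 2, 2, by norm_num, by norm_num, rfl⟩
  · rintro a ⟨r, hr0, hr1, rfl⟩
    have hφ : 0 < phiP p r := phiP_pos hp1 hr0 hr1
    have hg := g_nonneg hp hr0
    rw [le_div_iff₀ hφ, div_mul_eq_mul_div, one_mul, div_le_iff₀ h1p]
    calc phiP p r ≤ (1 - p) * (r * dphiP p r ^ 2) := hg
      _ = r * dphiP p r ^ 2 * (1 - p) := by ring
  · intro w hw
    have htend : Tendsto (fun r => r * (dphiP p r) ^ 2 / phiP p r) atTop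
        (𝓝 (1 / (1 - p))) := by
      have hfe : (fun r => r * (dphiP p r) ^ 2 / phiP p r)
          = fun r => (dphiP p r) ^ 2 / (phiP p r / r) := by
        funext r
        rw [div_div_eq_mul_div, mul_comm]
      rw [hfe]
      have h := ((tendsto_dphiP hp1).pow 2).div (tendsto_phiP_div hp1)
        (ne_of_gt (div_pos one_pos h1p))
      have hval : (1 / (1 - p)) ^ 2 / (1 / (1 - p)) = 1 / (1 - p) := by
        rw [pow_two, mul_div_assoc, div_self (by positivity), mul_one]
      rwa [hval] at h
    obtain ⟨r, hr1, hrw⟩ := ((eventually_gt_atTop (1:ℝ)).and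
      (htend.eventually_lt_const hw)).exists
    exact ⟨r * (dphiP p r) ^ 2 / phiP p r, ⟨r, by linarith, ne_of_gt hr1, rfl⟩, hrw⟩
end

section
/- For p ∈ [0,1], the quantity m_{p,1−p} = inf_{r>0, r≠1} r·φ_p'(r)·φ_{1−p}'(r)/φ_{1−p}(r) equals min{1/p, 1/(1−p)} (with the convention 1/0 = ∞ at the endpoints), and hence lies in [1, 2] for p ∈ (0,1). -/
open Real Filter Set Topology


lemma bern_lt {y t : ℝ} (hy : 0 ≤ y) (hy1 : y ≠ 1) (ht0 : 0 < t) (ht1 : t < 1) :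
    y ^ t < 1 + t * (y - 1) := by
  have h := rpow_one_add_lt_one_add_mul_self (s := y - 1) (by linarith)
    (by intro h; exact hy1 (by linarith)) ht0 ht1
  rwa [show (1:ℝ) + (y - 1) = y by ring] at h

lemma div_div_div_same (N D c : ℝ) (hc : c ≠ 0) : N / c / (D / c) = N / D := by
  rw [div_div_div_comm, div_self hc, div_one]

lemma fval {p r : ℝ} (hp0 : 0 < p) (hp1 : p < 1) (hr : 0 < r) :
    r * dphiP p r * dphiP (1 - p) r / phiP (1 - p) r
      = (r ^ p + r ^ (1 - p) - r - 1) / (r ^ (1 - p) - (1 - p) * r - p) := by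
  have hx : (0:ℝ) < r ^ p := rpow_pos_of_pos hr p
  have e1 : r ^ (p - 1) = r ^ p / r := by rw [rpow_sub hr, rpow_one]
  have e2 : r ^ (1 - p - 1) = (r ^ p)⁻¹ := by
    rw [show (1:ℝ) - p - 1 = -p by ring, rpow_neg hr.le]
  have e3 : r ^ (1 - p) = r / r ^ p := by rw [rpow_sub hr, rpow_one]
  rw [phiP, dphiP, dphiP]
  rw [if_neg hp0.ne', if_neg (by linarith : p ≠ 1),
    if_neg (by intro h; exact hp1.ne (by linarith)),
    if_neg (by intro h; exact hp0.ne' (by linarith)),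
    if_neg (by intro h; exact hp1.ne (by linarith)),
    if_neg (by intro h; exact hp0.ne' (by linarith))]
  rw [e1, e2, e3]
  set c : ℝ := (1 - p) * (1 - p - 1) with hcdef
  have hc : c ≠ 0 := by
    have : (1:ℝ) - p ≠ 0 := by intro h; exact hp1.ne (by linarith)
    have h2 : (1:ℝ) - p - 1 ≠ 0 := by intro h; exact hp0.ne' (by linarith)
    exact mul_ne_zero this h2
  have hpm1 : p - 1 ≠ 0 := by intro h; exact hp1.ne (by linarith)
  have hpm2 : (1:ℝ) - p - 1 ≠ 0 := by intro h; exact hp0.ne' (by linarith)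
  have hA : r * ((r ^ p / r - 1) / (p - 1)) * (((r ^ p)⁻¹ - 1) / (1 - p - 1))
      = (r ^ p + r / r ^ p - r - 1) / c := by
    rw [mul_div_assoc', mul_div_assoc', div_eq_div_iff hpm2 hc, hcdef]
    field_simp
    ring
  have hB : (r / r ^ p - (1 - p) * r + (1 - p) - 1) / ((1 - p) * (1 - p - 1))
      = (r / r ^ p - (1 - p) * r - p) / c := by
    rw [hcdef]; congr 1; ring
  rw [hA, hB, div_div_div_same _ _ _ hc]

lemma ratio_mono {x a b : ℝ} (hx : 0 < x) (hb : 0 < b) (hba : b ≤ a) :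
    a * (x ^ b - 1) ≤ b * (x ^ a - 1) := by
  have ha : 0 < a := hb.trans_le hba
  have h1 : x ^ b = (x ^ a) ^ (b / a) := by
    rw [← rpow_mul hx.le]; congr 1; field_simp
  have h2 : (x ^ a) ^ (b / a) ≤ 1 + (b / a) * (x ^ a - 1) := by
    have h := rpow_one_add_le_one_add_mul_self (s := x ^ a - 1) (p := b / a)
      (by nlinarith [rpow_pos_of_pos hx a]) (by positivity) (by rw [div_le_one ha]; exact hba)
    rwa [show (1:ℝ) + (x ^ a - 1) = x ^ a by ring] at h
  have h3 : a * (x ^ b - 1) ≤ a * ((1 + (b / a) * (x ^ a - 1)) - 1) := by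
    rw [h1]; nlinarith [h2]
  calc a * (x ^ b - 1) ≤ a * ((1 + (b / a) * (x ^ a - 1)) - 1) := h3
    _ = b * (x ^ a - 1) := by field_simp; ring

lemma Dneg {p r : ℝ} (hp0 : 0 < p) (hp1 : p < 1) (hr : 0 < r) (hr1 : r ≠ 1) :
    r ^ (1 - p) - (1 - p) * r - p < 0 := by
  have h := bern_lt hr.le hr1 (by linarith : (0:ℝ) < 1 - p) (by linarith)
  nlinarith

lemma lowerI {p r : ℝ} (hp0 : 0 < p) (hp1 : p < 1) (hr : 0 < r) (hr1 : r ≠ 1) :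
    min (1 / p) (1 / (1 - p)) ≤ (r ^ p + r ^ (1 - p) - r - 1) / (r ^ (1 - p) - (1 - p) * r - p) := by
  have hq0 : (0:ℝ) < 1 - p := by linarith
  have hD := Dneg hp0 hp1 hr hr1
  rw [le_div_iff_of_neg hD]
  rcases le_total p (1 - p) with hc | hc
  · -- min = 1/(1-p), need N ≤ (1/(1-p)) * D
    rw [min_eq_right (by apply one_div_le_one_div_of_le hp0 hc)]
    have key := ratio_mono hr hp0 hc
    -- (1-p) * (r^p - 1) ≤ p * (r^(1-p) - 1)
    rw [div_mul_eq_mul_div, one_mul, le_div_iff₀ hq0]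
    nlinarith [key]
  · -- min = 1/p, need N ≤ (1/p) * D
    rw [min_eq_left (by apply one_div_le_one_div_of_le hq0 hc)]
    have key := ratio_mono (inv_pos.2 hr) hq0 hc
    -- p * ((r⁻¹)^(1-p) - 1) ≤ (1-p) * ((r⁻¹)^p - 1)
    rw [inv_rpow hr.le, inv_rpow hr.le] at key
    have hmul : r ^ p * r ^ (1 - p) = r := by rw [← rpow_add hr]; norm_num
    have hxp := rpow_pos_of_pos hr p
    have hxq := rpow_pos_of_pos hr (1 - p)
    have e1 : r * (r ^ (1 - p))⁻¹ = r ^ p := by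
      nth_rewrite 1 [← hmul]; rw [mul_assoc, mul_inv_cancel₀ hxq.ne', mul_one]
    have e2 : r * (r ^ p)⁻¹ = r ^ (1 - p) := by
      nth_rewrite 1 [← hmul]
      rw [mul_comm (r ^ p), mul_assoc, mul_inv_cancel₀ hxp.ne', mul_one]
    have key2 := mul_le_mul_of_nonneg_left key hr.le
    rw [div_mul_eq_mul_div, one_mul, le_div_iff₀ hp0]
    nlinarith [key2, e1, e2]

lemma tendstoA {p : ℝ} (hp0 : 0 < p) (hp1 : p < 1) :
    Tendsto (fun r : ℝ => (r ^ p + r ^ (1 - p) - r - 1) / (r ^ (1 - p) - (1 - p) * r - p))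
      (𝓝[>] (0:ℝ)) (𝓝 (1 / p)) := by
  have hrp : Tendsto (fun r : ℝ => r ^ p) (𝓝[>] (0:ℝ)) (𝓝 0) := by
    have h := (Real.continuousAt_rpow_const 0 p (Or.inr hp0.le)).tendsto
    rw [Real.zero_rpow hp0.ne'] at h
    exact h.mono_left nhdsWithin_le_nhds
  have hrq : Tendsto (fun r : ℝ => r ^ (1 - p)) (𝓝[>] (0:ℝ)) (𝓝 0) := by
    have h := (Real.continuousAt_rpow_const 0 (1 - p) (Or.inr (by linarith))).tendsto
    rw [Real.zero_rpow (by intro h; exact hp1.ne (by linarith))] at h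
    exact h.mono_left nhdsWithin_le_nhds
  have hid : Tendsto (fun r : ℝ => r) (𝓝[>] (0:ℝ)) (𝓝 0) :=
    (continuous_id.tendsto 0).mono_left nhdsWithin_le_nhds
  have hnum : Tendsto (fun r : ℝ => r ^ p + r ^ (1 - p) - r - 1) (𝓝[>] (0:ℝ)) (𝓝 (-1)) := by
    have := ((hrp.add hrq).sub hid).sub (tendsto_const_nhds (x := (1:ℝ)))
    simpa using this
  have hden : Tendsto (fun r : ℝ => r ^ (1 - p) - (1 - p) * r - p) (𝓝[>] (0:ℝ)) (𝓝 (-p)) := by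
    have := (hrq.sub (hid.const_mul (1 - p))).sub (tendsto_const_nhds (x := p))
    simpa using this
  have hdiv := hnum.div hden (by simpa using hp0.ne')
  rwa [show (-1 : ℝ) / -p = 1 / p from neg_div_neg_eq 1 p] at hdiv

lemma tendstoB {p : ℝ} (hp0 : 0 < p) (hp1 : p < 1) :
    Tendsto (fun r : ℝ => (r ^ p + r ^ (1 - p) - r - 1) / (r ^ (1 - p) - (1 - p) * r - p))
      atTop (𝓝 (1 / (1 - p))) := by
  have h1 : Tendsto (fun r : ℝ => r ^ (p - 1)) atTop (𝓝 0) := by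
    have := tendsto_rpow_neg_atTop (by linarith : (0:ℝ) < 1 - p)
    simpa [show -(1 - p) = p - 1 by ring] using this
  have h2 : Tendsto (fun r : ℝ => r ^ (-p)) atTop (𝓝 0) := tendsto_rpow_neg_atTop hp0
  have h3 : Tendsto (fun r : ℝ => r⁻¹) atTop (𝓝 (0:ℝ)) := tendsto_inv_atTop_zero
  have hnum : Tendsto (fun r : ℝ => r ^ (p - 1) + r ^ (-p) - 1 - r⁻¹) atTop (𝓝 (-1)) := by
    have := ((h1.add h2).sub (tendsto_const_nhds (x := (1:ℝ)))).sub h3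
    simpa using this
  have hden : Tendsto (fun r : ℝ => r ^ (-p) - (1 - p) - p * r⁻¹) atTop (𝓝 (-(1 - p))) := by
    have := (h2.sub (tendsto_const_nhds (x := (1 - p : ℝ)))).sub (h3.const_mul p)
    simpa using this
  have hdiv := hnum.div hden (by intro h; exact hp1.ne (by nlinarith))
  rw [show (-1 : ℝ) / -(1 - p) = 1 / (1 - p) from neg_div_neg_eq 1 (1 - p)] at hdiv
  apply Tendsto.congr' _ hdiv
  filter_upwards [eventually_gt_atTop (0:ℝ)] with r hr
  have E1 : r ^ (p - 1) = r ^ p * r⁻¹ := by rw [rpow_sub hr, rpow_one, div_eq_mul_inv]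
  have E2 : r ^ (-p) = r ^ (1 - p) * r⁻¹ := by
    rw [show -p = 1 - p - 1 by ring, rpow_sub hr, rpow_one, div_eq_mul_inv]
  have hnum_eq : (r ^ p + r ^ (1 - p) - r - 1) * r⁻¹ = r ^ (p - 1) + r ^ (-p) - 1 - r⁻¹ := by
    rw [E1, E2]; field_simp
  have hden_eq : (r ^ (1 - p) - (1 - p) * r - p) * r⁻¹ = r ^ (-p) - (1 - p) - p * r⁻¹ := by
    rw [E2]; field_simp
  simp only [Pi.div_apply]
  rw [← hnum_eq, ← hden_eq, mul_div_mul_right _ _ (inv_ne_zero hr.ne')]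

lemma fval0 {r : ℝ} (hr : 0 < r) :
    r * dphiP 0 r * dphiP (1 - 0) r / phiP (1 - 0) r
      = ((r - 1) * Real.log r) / (r * Real.log r - r + 1) := by
  rw [phiP, dphiP, dphiP]
  norm_num
  congr 1
  field_simp

lemma fval1 {r : ℝ} (hr : 0 < r) :
    r * dphiP 1 r * dphiP (1 - 1) r / phiP (1 - 1) r
      = ((r - 1) * Real.log r) / (r - 1 - Real.log r) := by
  rw [phiP, dphiP, dphiP]
  norm_num
  congr 1
  field_simp

lemma Dpos0 {r : ℝ} (hr : 0 < r) (hr1 : r ≠ 1) : 0 < r * Real.log r - r + 1 := by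
  have h := Real.log_lt_sub_one_of_pos (inv_pos.2 hr) (by
    intro h; exact hr1 (by rw [← inv_inv r, h, inv_one]))
  rw [Real.log_inv] at h
  have := mul_lt_mul_of_pos_left h hr
  rw [mul_sub, mul_inv_cancel₀ hr.ne'] at this
  nlinarith

lemma Dpos1 {r : ℝ} (hr : 0 < r) (hr1 : r ≠ 1) : 0 < r - 1 - Real.log r := by
  have h := Real.log_lt_sub_one_of_pos hr hr1
  linarith

lemma lower0 {r : ℝ} (hr : 0 < r) (hr1 : r ≠ 1) :
    1 ≤ ((r - 1) * Real.log r) / (r * Real.log r - r + 1) := by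
  have hD := Dpos0 hr hr1
  rw [le_div_iff₀ hD, one_mul]
  have h := Real.log_le_sub_one_of_pos hr
  nlinarith

lemma lower1 {r : ℝ} (hr : 0 < r) (hr1 : r ≠ 1) :
    1 ≤ ((r - 1) * Real.log r) / (r - 1 - Real.log r) := by
  have hD := Dpos1 hr hr1
  rw [le_div_iff₀ hD, one_mul]
  have h := Real.log_le_sub_one_of_pos (inv_pos.2 hr)
  rw [Real.log_inv] at h
  have := mul_le_mul_of_nonneg_left h hr.le
  rw [mul_sub, mul_inv_cancel₀ hr.ne'] at this
  nlinarith

lemma tendsto0 : Tendsto (fun r : ℝ => ((r - 1) * Real.log r) / (r * Real.log r - r + 1))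
    atTop (𝓝 1) := by
  have hlog := Real.tendsto_log_atTop
  have h1 : Tendsto (fun r : ℝ => (Real.log r)⁻¹) atTop (𝓝 0) := hlog.inv_tendsto_atTop
  have h2 : Tendsto (fun r : ℝ => r * Real.log r) atTop atTop :=
    tendsto_id.atTop_mul_atTop₀ hlog
  have h3 : Tendsto (fun r : ℝ => (r * Real.log r)⁻¹) atTop (𝓝 0) := h2.inv_tendsto_atTop
  have h4 : Tendsto (fun r : ℝ => r⁻¹) atTop (𝓝 (0:ℝ)) := tendsto_inv_atTop_zero
  have hnum : Tendsto (fun r : ℝ => 1 - r⁻¹) atTop (𝓝 1) := by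
    simpa using (tendsto_const_nhds (x := (1:ℝ))).sub h4
  have hden : Tendsto (fun r : ℝ => 1 - (Real.log r)⁻¹ + (r * Real.log r)⁻¹) atTop (𝓝 1) := by
    simpa using ((tendsto_const_nhds (x := (1:ℝ))).sub h1).add h3
  have hdiv := hnum.div hden one_ne_zero
  rw [show (1:ℝ)/1 = 1 by norm_num] at hdiv
  apply Tendsto.congr' _ hdiv
  filter_upwards [eventually_gt_atTop (1:ℝ)] with r hr
  have hr0 : 0 < r := lt_trans zero_lt_one hr
  have hlr : 0 < Real.log r := Real.log_pos hr
  have hrl : r * Real.log r ≠ 0 := by positivity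
  simp only [Pi.div_apply]
  rw [show (r - 1) * Real.log r = (1 - r⁻¹) * (r * Real.log r) by field_simp,
    show r * Real.log r - r + 1 = (1 - (Real.log r)⁻¹ + (r * Real.log r)⁻¹) * (r * Real.log r) by
      field_simp,
    mul_div_mul_right _ _ hrl]

lemma tendsto1 : Tendsto (fun r : ℝ => ((r - 1) * Real.log r) / (r - 1 - Real.log r))
    (𝓝[>] (0:ℝ)) (𝓝 1) := by
  have hlog : Tendsto (fun r : ℝ => -Real.log r) (𝓝[>] (0:ℝ)) atTop :=
    tendsto_neg_atBot_atTop.comp Real.tendsto_log_nhdsGT_zero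
  have hid : Tendsto (fun r : ℝ => r) (𝓝[>] (0:ℝ)) (𝓝 0) :=
    (continuous_id.tendsto 0).mono_left nhdsWithin_le_nhds
  have hsub : Tendsto (fun r : ℝ => r - 1) (𝓝[>] (0:ℝ)) (𝓝 (-1)) := by
    simpa using hid.sub (tendsto_const_nhds (x := (1:ℝ)))
  have h5 : Tendsto (fun r : ℝ => (r - 1) / (-Real.log r)) (𝓝[>] (0:ℝ)) (𝓝 0) :=
    hsub.div_atTop hlog
  have hnum : Tendsto (fun r : ℝ => 1 - r) (𝓝[>] (0:ℝ)) (𝓝 1) := by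
    simpa using (tendsto_const_nhds (x := (1:ℝ))).sub hid
  have hden : Tendsto (fun r : ℝ => (r - 1) / (-Real.log r) + 1) (𝓝[>] (0:ℝ)) (𝓝 1) := by
    simpa using h5.add (tendsto_const_nhds (x := (1:ℝ)))
  have hdiv := hnum.div hden one_ne_zero
  rw [show (1:ℝ)/1 = 1 by norm_num] at hdiv
  apply Tendsto.congr' _ hdiv
  filter_upwards [Ioo_mem_nhdsGT_of_mem (by constructor <;> norm_num : (0:ℝ) ∈ Ico (0:ℝ) 1)]
    with r hr
  obtain ⟨hr0, hr1⟩ := hr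
  have hlr : Real.log r < 0 := Real.log_neg hr0 hr1
  have hc : -Real.log r ≠ 0 := by linarith [hlr]
  simp only [Pi.div_apply]
  rw [show (r - 1) * Real.log r = (1 - r) * (-Real.log r) by ring,
    show r - 1 - Real.log r = ((r - 1) / (-Real.log r) + 1) * (-Real.log r) by
      rw [add_mul, div_mul_cancel₀ _ hc, one_mul]; ring,
    mul_div_mul_right _ _ hc]

lemma sInf_eq_of {S : Set ℝ} {c : ℝ} (hne : S.Nonempty)
    (hlb : ∀ x ∈ S, c ≤ x) (hub : ∀ b ∈ lowerBounds S, b ≤ c) : sInf S = c :=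
  IsGLB.csInf_eq ⟨hlb, hub⟩ hne

/-- For `p ∈ [0,1]`, `m_{p,1−p} = min{1/p, 1/(1−p)}` (with `1/0 = ∞` at the
endpoints, where the minimum is the finite value `1`), and `m_{p,1−p} ∈ [1,2]`
for `p ∈ (0,1)`. -/
theorem mp_one_minus_p (p : ℝ) (hp : p ∈ Set.Icc (0:ℝ) 1) :
    (sInf {m : ℝ | ∃ r : ℝ, 0 < r ∧ r ≠ 1 ∧
        m = r * dphiP p r * dphiP (1 - p) r / phiP (1 - p) r}
      = if p = 0 ∨ p = 1 then 1 else min (1 / p) (1 / (1 - p))) ∧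
    (p ∈ Set.Ioo (0:ℝ) 1 → min (1 / p) (1 / (1 - p)) ∈ Set.Icc (1:ℝ) 2) := by
  obtain ⟨hp0, hp1⟩ := hp
  constructor
  · by_cases h0 : p = 0
    · subst h0
      rw [if_pos (Or.inl rfl)]
      apply sInf_eq_of
      · exact ⟨_, ⟨2, by norm_num, by norm_num, rfl⟩⟩
      · rintro x ⟨r, hr, hr1, rfl⟩
        rw [fval0 hr]
        exact lower0 hr hr1
      · intro b hb
        refine ge_of_tendsto tendsto0 ?_
        filter_upwards [eventually_gt_atTop (1:ℝ)] with r hr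
        have hr0 : (0:ℝ) < r := lt_trans zero_lt_one hr
        have := hb ⟨r, hr0, hr.ne', rfl⟩
        rwa [fval0 hr0] at this
    · by_cases h1 : p = 1
      · subst h1
        rw [if_pos (Or.inr rfl)]
        apply sInf_eq_of
        · exact ⟨_, ⟨2, by norm_num, by norm_num, rfl⟩⟩
        · rintro x ⟨r, hr, hr1, rfl⟩
          rw [fval1 hr]
          exact lower1 hr hr1
        · intro b hb
          refine ge_of_tendsto tendsto1 ?_
          filter_upwards [Ioo_mem_nhdsGT_of_mem
            (by constructor <;> norm_num : (0:ℝ) ∈ Ico (0:ℝ) 1)] with r hr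
          obtain ⟨hr0, hr1⟩ := hr
          have := hb ⟨r, hr0, hr1.ne, rfl⟩
          rwa [fval1 hr0] at this
      · have hp0' : 0 < p := lt_of_le_of_ne hp0 (Ne.symm h0)
        have hp1' : p < 1 := lt_of_le_of_ne hp1 h1
        rw [if_neg (by push_neg; exact ⟨h0, h1⟩)]
        apply sInf_eq_of
        · exact ⟨_, ⟨2, by norm_num, by norm_num, rfl⟩⟩
        · rintro x ⟨r, hr, hr1, rfl⟩
          rw [fval hp0' hp1' hr]
          exact lowerI hp0' hp1' hr hr1
        · intro b hb
          apply le_min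
          · refine ge_of_tendsto (tendstoA hp0' hp1') ?_
            filter_upwards [Ioo_mem_nhdsGT_of_mem
              (by constructor <;> norm_num : (0:ℝ) ∈ Ico (0:ℝ) 1)] with r hr
            obtain ⟨hr0, hr1⟩ := hr
            have := hb ⟨r, hr0, hr1.ne, rfl⟩
            rwa [fval hp0' hp1' hr0] at this
          · refine ge_of_tendsto (tendstoB hp0' hp1') ?_
            filter_upwards [eventually_gt_atTop (1:ℝ)] with r hr
            have hr0 : (0:ℝ) < r := lt_trans zero_lt_one hr
            have := hb ⟨r, hr0, hr.ne', rfl⟩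
            rwa [fval hp0' hp1' hr0] at this
  · rintro ⟨h0, h1⟩
    constructor
    · apply le_min
      · exact (le_div_iff₀ h0).mpr (by linarith)
      · exact (le_div_iff₀ (by linarith)).mpr (by linarith)
    · rcases le_total p (1/2) with hc | hc
      · exact min_le_of_right_le (by rw [div_le_iff₀ (by linarith)]; linarith)
      · exact min_le_of_left_le (by rw [div_le_iff₀ h0]; linarith)
end
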